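/- A finite metric space (X,d) is a tree metric (embeds isometrically into a weighted tree) if and only if its hyperbolicity is 0, i.e., for every four points the two larger of the three distance sums are equal (the four-point condition). -/

import Mathlib

/-- The hyperbolicity (S3 - S2)/2 of a quadruple of points in a metric space,
where S1 ≤ S2 ≤ S3 are the three distance sums d(u,v)+d(w,x), d(u,w)+d(v,x),
d(u,x)+d(v,w) in nondecreasing order (S3 - S2 = 2·max + min - (S1+S2+S3)). -/
noncomputable def metricDelta4 {X : Type*} [MetricSpace X] (u v w x : X) : ℝ :=
  let A := dist u v + dist w x
  let B := dist u w + dist v x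
  let C := dist u x + dist v w
  (2 * max A (max B C) + min A (min B C) - (A + B + C)) / 2

/-!
A weighted tree distance is the sum, over the edges `e`, of `wt e` times the cut pseudometric of
the two components of `T - e`. A cut pseudometric satisfies the four-point inequality
`d(a,b) + d(c,d) ≤ d(a,c) + d(b,d)` unless its split is `ac|bd`, and no two edges of a graph induce
the crossing splits `ac|bd` and `ad|bc`; summing over the edges gives the four-point condition.

Conversely, under the four-point condition the Gromov products
`(x|y) = (d(x,r) + d(y,r) - d(x,y)) / 2` at a base point `r` satisfy
`(x|y) ≥ min (x|z) (z|y)`. Hence, for each level `t`, "`x` and `y` agree up to `t`", i.e.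
`t ≤ (x|y)`, is an equivalence relation, and its classes over the finitely many levels form a
rooted tree in which each class is joined to its class one level lower. With level differences as
edge weights, the path from `x` to `y` descends from level `d(x,r)` to level `(x|y)` and climbs to
`d(y,r)`; its length is `d(x,r) + d(y,r) - 2 (x|y) = d(x,y)`.
-/

open Finset

lemma two_mul_max_add_min_sub_eq_zero_iff (A B C : ℝ) :
    (2 * max A (max B C) + min A (min B C) - (A + B + C)) / 2 = 0 ↔
      A ≤ max B C ∧ B ≤ max A C ∧ C ≤ max A B := by
  simp only [max_def, min_def]
  split_ifs <;> constructor <;> intro h <;> (try obtain ⟨_, _, _⟩ := h) <;>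
    first | linarith | (refine ⟨?_, ?_, ?_⟩ <;> linarith)

lemma forall_metricDelta4_eq_zero_iff {X : Type*} [MetricSpace X] :
    (∀ u v w x : X, metricDelta4 u v w x = 0) ↔
      ∀ a b c d : X, dist a b + dist c d ≤ max (dist a c + dist b d) (dist a d + dist b c) := by
  simp only [metricDelta4, two_mul_max_add_min_sub_eq_zero_iff]
  refine ⟨fun h a b c d => (h a b c d).1, fun h u v w x => ⟨h u v w x, ?_, ?_⟩⟩
  · simpa only [dist_comm w v] using h u w v x
  · simpa only [dist_comm x w, dist_comm x v] using h u x v w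

namespace SimpleGraph

variable {V : Type*} {G : SimpleGraph V}

lemma reachable_deleteEdges_of_not_reachable_mem {e e' : Sym2 V} {u v x : V} (hx : x ∈ e')
    (huv : (G.deleteEdges {e}).Reachable u v) (hux : ¬(G.deleteEdges {e}).Reachable u x) :
    (G.deleteEdges {e'}).Reachable u v := by
  classical
  obtain ⟨w⟩ := huv
  have hw : ∀ f ∈ w.edges, f ∉ ({e'} : Set (Sym2 V)) := by
    rintro f hf rfl
    exact hux ⟨w.takeUntil x (w.mem_support_of_mem_edges hf hx)⟩
  exact ⟨(w.toDeleteEdges {e'} hw).mapLe (deleteEdges_mono (G.deleteEdges_le {e}))⟩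

/-- The splits cut out by two edges never cross: if `G - e₁` splits `{a, c} | {b, d}`, then
`G - e₂` does not split `{a, d} | {b, c}`. -/
lemma reachable_deleteEdges_of_crossing {e₁ e₂ : Sym2 V} {a b c d : V}
    (h₁ac : (G.deleteEdges {e₁}).Reachable a c) (h₁bd : (G.deleteEdges {e₁}).Reachable b d)
    (h₁ab : ¬(G.deleteEdges {e₁}).Reachable a b)
    (h₂ad : (G.deleteEdges {e₂}).Reachable a d) (h₂bc : (G.deleteEdges {e₂}).Reachable b c) :
    (G.deleteEdges {e₂}).Reachable a b := by
  obtain ⟨x, hx⟩ : ∃ x, x ∈ e₂ := ⟨_, e₂.out_fst_mem⟩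
  by_cases hax : (G.deleteEdges {e₁}).Reachable a x
  · have hbx : ¬(G.deleteEdges {e₁}).Reachable b x := fun hbx => h₁ab (hax.trans hbx.symm)
    exact h₂ad.trans (reachable_deleteEdges_of_not_reachable_mem hx h₁bd hbx).symm
  · exact (reachable_deleteEdges_of_not_reachable_mem hx h₁ac hax).trans h₂bc.symm

lemma Reachable.reachable_deleteEdges_or {p q u : V} (h : G.Reachable u p) :
    (G.deleteEdges {s(p, q)}).Reachable u p ∨ (G.deleteEdges {s(p, q)}).Reachable u q := by
  suffices ∀ z (w : G.Walk u z), z = p →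
      (G.deleteEdges {s(p, q)}).Reachable u p ∨ (G.deleteEdges {s(p, q)}).Reachable u q from
    h.elim (this p · rfl)
  intro z w hz
  clear h
  induction w with
  | nil => exact .inl (hz ▸ .rfl)
  | @cons u v z hadj w ih =>
    by_cases he : s(u, v) = s(p, q)
    · rcases Sym2.eq_iff.mp he with ⟨rfl, -⟩ | ⟨rfl, -⟩
      exacts [.inl .rfl, .inr .rfl]
    · have hadj' : (G.deleteEdges {s(p, q)}).Adj u v := by simp [hadj, he]
      exact (ih hz).imp hadj'.reachable.trans hadj'.reachable.trans

/-- `G - s(p, q)` has at most two components, those of `p` and `q`. -/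
lemma Connected.reachable_deleteEdges_iff (hG : G.Connected) {p q u v : V} :
    (G.deleteEdges {s(p, q)}).Reachable u v ↔
      ((G.deleteEdges {s(p, q)}).Reachable u q ↔ (G.deleteEdges {s(p, q)}).Reachable v q) := by
  have hu := (hG u p).reachable_deleteEdges_or (q := q)
  have hv := (hG v p).reachable_deleteEdges_or (q := q)
  constructor
  · intro huv
    exact ⟨huv.symm.trans, huv.trans⟩
  · intro h
    rcases hu with hu | hu <;> rcases hv with hv | hv
    · exact hu.trans hv.symm
    · exact (h.mpr hv).trans hv.symm
    · exact hu.trans (h.mp hu).symm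
    · exact hu.trans hv.symm

lemma IsAcyclic.mem_edges_iff_not_reachable_deleteEdges (hG : G.IsAcyclic) {a b : V}
    {p : G.Walk a b} (hp : p.IsPath) {e : Sym2 V} :
    e ∈ p.edges ↔ ¬(G.deleteEdges {e}).Reachable a b := by
  classical
  refine ⟨fun he hR => ?_, p.mem_edges_of_not_reachable_deleteEdges⟩
  induction e using Sym2.ind with | _ x y =>
  obtain ⟨q, hq⟩ := reachable_deleteEdges_iff_exists_walk.mp hR
  have hpq : p = q.bypass :=
    congrArg Subtype.val <| (hG.subsingleton_path a b).elim ⟨p, hp⟩ ⟨_, q.bypass_isPath⟩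
  exact hq (q.edges_bypass_subset_edges (hpq ▸ he))

lemma IsAcyclic.sum_map_edges_eq_sum {M : Type*} [AddCommMonoid M] [Fintype V] [DecidableEq V]
    [∀ e : Sym2 V, DecidableRel (G.deleteEdges {e}).Reachable] (hG : G.IsAcyclic) {a b : V}
    {p : G.Walk a b} (hp : p.IsPath) (wt : Sym2 V → M) :
    (p.edges.map wt).sum = ∑ e, if (G.deleteEdges {e}).Reachable a b then 0 else wt e := by
  rw [← List.sum_toFinset _ hp.isTrail.edges_nodup, sum_ite, sum_const_zero, zero_add]
  congr 1
  ext e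
  simp [hG.mem_edges_iff_not_reachable_deleteEdges hp]

lemma Connected.cut_four_point (hG : G.Connected) (p q : V)
    [DecidableRel (G.deleteEdges {s(p, q)}).Reachable] {w : ℝ} (hw : 0 ≤ w) {a b c d : V}
    (h : ¬((G.deleteEdges {s(p, q)}).Reachable a c ∧ (G.deleteEdges {s(p, q)}).Reachable b d ∧
      ¬(G.deleteEdges {s(p, q)}).Reachable a b)) :
    (if (G.deleteEdges {s(p, q)}).Reachable a b then 0 else w) +
        (if (G.deleteEdges {s(p, q)}).Reachable c d then 0 else w) ≤
      (if (G.deleteEdges {s(p, q)}).Reachable a c then 0 else w) +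
        (if (G.deleteEdges {s(p, q)}).Reachable b d then 0 else w) := by
  simp only [hG.reachable_deleteEdges_iff (u := a) (v := b),
    hG.reachable_deleteEdges_iff (u := c) (v := d), hG.reachable_deleteEdges_iff (u := a) (v := c),
    hG.reachable_deleteEdges_iff (u := b) (v := d)] at h ⊢
  by_cases ha : (G.deleteEdges {s(p, q)}).Reachable a q <;>
    by_cases hb : (G.deleteEdges {s(p, q)}).Reachable b q <;>
    by_cases hc : (G.deleteEdges {s(p, q)}).Reachable c q <;>
    by_cases hd : (G.deleteEdges {s(p, q)}).Reachable d q <;>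
    simp_all

theorem IsTree.four_point [Fintype V] (hT : G.IsTree) {wt : Sym2 V → ℝ} (hwt : ∀ e, 0 ≤ wt e)
    {dT : V → V → ℝ} (hdT : ∀ a b (p : G.Walk a b), p.IsPath → dT a b = (p.edges.map wt).sum)
    (a b c d : V) : dT a b + dT c d ≤ max (dT a c + dT b d) (dT a d + dT b c) := by
  classical
  have hcut : ∀ u v, dT u v = ∑ e, if (G.deleteEdges {e}).Reachable u v then 0 else wt e := by
    intro u v
    obtain ⟨p, hp⟩ := hT.connected.exists_isPath u v
    rw [hdT u v p hp, hT.isAcyclic.sum_map_edges_eq_sum hp]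
  simp only [hcut, ← sum_add_distrib]
  by_cases hsplit : ∃ e, (G.deleteEdges {e}).Reachable a c ∧ (G.deleteEdges {e}).Reachable b d ∧
      ¬(G.deleteEdges {e}).Reachable a b
  · obtain ⟨e₁, h₁ac, h₁bd, h₁ab⟩ := hsplit
    refine le_max_of_le_right (sum_le_sum fun e _ => ?_)
    induction e using Sym2.ind with | _ p q =>
    simp only [reachable_comm (u := c)]
    exact hT.connected.cut_four_point p q (hwt _) fun ⟨had, hbc, hab⟩ =>
      hab (reachable_deleteEdges_of_crossing h₁ac h₁bd h₁ab had hbc)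
  · push Not at hsplit
    refine le_max_of_le_left (sum_le_sum fun e _ => ?_)
    induction e using Sym2.ind with | _ p q =>
    exact hT.connected.cut_four_point p q (hwt _) fun ⟨hac, hbd, hab⟩ => hab (hsplit _ hac hbd)

lemma IsTree.exists_forall_isPath_eq_sum {M : Type*} [AddMonoid M] (hT : G.IsTree)
    (wt : Sym2 V → M) :
    ∃ dT : V → V → M, ∀ a b (p : G.Walk a b), p.IsPath → dT a b = (p.edges.map wt).sum := by
  choose P hP hPu using hT.existsUnique_path
  exact ⟨fun a b => ((P a b).edges.map wt).sum, fun a b p hp => by rw [hPu a b p hp]⟩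

section ParentGraph

variable {α : Type*} [Preorder α] {par : V → V}

def parentGraph (par : V → V) : SimpleGraph V := fromRel fun v w => par v = w

lemma parentGraph_adj_parent {v : V} (h : par v ≠ v) : (parentGraph par).Adj v (par v) := by
  simp [parentGraph, Ne.symm h]

variable {rank : V → α}

lemma rank_iterate_le (hrank : ∀ v, par v ≠ v → rank (par v) < rank v) (k : ℕ) (v : V) :
    rank (par^[k] v) ≤ rank v := by
  induction k generalizing v with
  | zero => exact le_rfl
  | succ k ih =>
    refine (ih (par v)).trans ?_
    by_cases h : par v = v
    · rw [h]
    · exact (hrank v h).le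

lemma isBridge_parentGraph (hrank : ∀ v, par v ≠ v → rank (par v) < rank v) {v : V}
    (hv : par v ≠ v) : (parentGraph par).IsBridge s(v, par v) := by
  -- the descendants of `v` are closed under adjacency in `G - s(v, par v)`, and `par v` is not one
  set S := {u | ∃ j, par^[j] u = v}
  have hS : ∀ a b, ((parentGraph par).deleteEdges {s(v, par v)}).Walk a b → a ∈ S → b ∈ S := by
    intro a b w
    induction w with
    | nil => exact id
    | @cons a b c hadj w ih =>
      rintro ⟨j, hj⟩
      apply ih
      obtain ⟨⟨-, hab | hba⟩, hne⟩ := deleteEdges_adj.mp hadj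
      · cases j with
        | zero => exact absurd (by rw [← hab, ← hj]; rfl) hne
        | succ j => exact ⟨j, by rw [← hab, ← hj]; rfl⟩
      · exact ⟨j + 1, by rw [Function.iterate_succ_apply, hba, hj]⟩
  rintro ⟨w⟩
  obtain ⟨j, hj⟩ := hS _ _ w ⟨0, rfl⟩
  have := rank_iterate_le hrank j (par v)
  rw [hj] at this
  exact lt_irrefl _ ((hrank v hv).trans_le this)

lemma isAcyclic_parentGraph (hrank : ∀ v, par v ≠ v → rank (par v) < rank v) :
    (parentGraph par).IsAcyclic := by
  rw [isAcyclic_iff_forall_adj_isBridge]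
  rintro a b ⟨hne, rfl | rfl⟩
  · exact isBridge_parentGraph hrank hne.symm
  · rw [Sym2.eq_swap]
    exact isBridge_parentGraph hrank hne

lemma reachable_parentGraph [Finite V] (hrank : ∀ v, par v ≠ v → rank (par v) < rank v)
    {root : V} (hroot : ∀ v, par v = v → v = root) (v : V) :
    (parentGraph par).Reachable v root := by
  induction v using (Finite.wellFounded_of_trans_of_irrefl (InvImage (· < ·) rank)).induction
    with | _ v ih =>
  by_cases h : par v = v
  · rw [hroot v h]
  · exact (parentGraph_adj_parent h).reachable.trans (ih _ (hrank v h))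

lemma isTree_parentGraph [Finite V] (hrank : ∀ v, par v ≠ v → rank (par v) < rank v)
    {root : V} (hroot : ∀ v, par v = v → v = root) : (parentGraph par).IsTree :=
  ⟨(connected_iff_exists_forall_reachable _).mpr
      ⟨root, fun v => (reachable_parentGraph hrank hroot v).symm⟩,
    isAcyclic_parentGraph hrank⟩

end ParentGraph

lemma Walk.IsPath.append {u v w : V} {p : G.Walk u v}
    {q : G.Walk v w} (hp : p.IsPath) (hq : q.IsPath)
    (h : ∀ x ∈ p.support, x ∈ q.support → x = v) : (p.append q).IsPath := by
  rw [Walk.isPath_def, Walk.support_append, List.nodup_append]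
  refine ⟨hp.support_nodup, hq.support_nodup.sublist q.support.tail_sublist, ?_⟩
  rintro x hx _ hy rfl
  obtain rfl := h x hx (List.mem_of_mem_tail hy)
  have := hq.support_nodup
  rw [← q.cons_tail_support] at this
  exact (List.nodup_cons.mp this).1 hy

end SimpleGraph

section GromovProduct

variable {X : Type*} [PseudoMetricSpace X]

noncomputable def gromovProduct (r x y : X) : ℝ := (dist x r + dist y r - dist x y) / 2

lemma gromovProduct_comm (r x y : X) : gromovProduct r x y = gromovProduct r y x := by
  rw [gromovProduct, gromovProduct, dist_comm x y, add_comm (dist x r)]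

lemma gromovProduct_nonneg (r x y : X) : 0 ≤ gromovProduct r x y := by
  have := dist_triangle_right x y r
  rw [gromovProduct]
  linarith

lemma gromovProduct_le_dist (r x y : X) : gromovProduct r x y ≤ dist x r := by
  have := dist_triangle_left y r x
  rw [gromovProduct]
  linarith

lemma gromovProduct_self (r x : X) : gromovProduct r x x = dist x r := by
  rw [gromovProduct, dist_self]
  ring

lemma min_gromovProduct_le
    (h : ∀ a b c d : X, dist a b + dist c d ≤ max (dist a c + dist b d) (dist a d + dist b c))
    (r x y z : X) : min (gromovProduct r x z) (gromovProduct r z y) ≤ gromovProduct r x y := by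
  have := h r z x y
  rw [dist_comm r z, dist_comm r x, dist_comm r y] at this
  simp only [gromovProduct]
  rcases le_max_iff.mp this with h' | h'
  · exact min_le_of_right_le (by linarith [dist_comm z y])
  · exact min_le_of_left_le (by linarith [dist_comm z x])

end GromovProduct

namespace GromovTree

open SimpleGraph (parentGraph parentGraph_adj_parent isTree_parentGraph Walk)

variable {X : Type*} [MetricSpace X] [Fintype X] (r : X)

noncomputable def levels : Finset ℝ := univ.image fun p : X × X => gromovProduct r p.1 p.2

lemma gromovProduct_mem_levels (x y : X) : gromovProduct r x y ∈ levels r :=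
  mem_image_of_mem _ (mem_univ (x, y))

lemma dist_mem_levels (x : X) : dist x r ∈ levels r :=
  gromovProduct_self r x ▸ gromovProduct_mem_levels r x x

lemma zero_mem_levels : (0 : ℝ) ∈ levels r := by
  simpa using dist_mem_levels r r

lemma nonneg_of_mem_levels {t : ℝ} (ht : t ∈ levels r) : 0 ≤ t := by
  obtain ⟨p, -, rfl⟩ := mem_image.mp ht
  exact gromovProduct_nonneg r p.1 p.2

noncomputable def prevLevel (t : ℝ) : ℝ :=
  if h : ((levels r).filter (· < t)).Nonempty then ((levels r).filter (· < t)).max' h else t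

lemma prevLevel_le (t : ℝ) : prevLevel r t ≤ t := by
  rw [prevLevel]
  split_ifs with h
  · exact (mem_filter.mp (max'_mem _ h)).2.le
  · exact le_rfl

lemma prevLevel_mem {t : ℝ} (ht : t ∈ levels r) : prevLevel r t ∈ levels r := by
  rw [prevLevel]
  split_ifs with h
  · exact (mem_filter.mp (max'_mem _ h)).1
  · exact ht

lemma le_prevLevel {s t : ℝ} (hs : s ∈ levels r) (hst : s < t) : s ≤ prevLevel r t := by
  have h : ((levels r).filter (· < t)).Nonempty := ⟨s, mem_filter.mpr ⟨hs, hst⟩⟩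
  rw [prevLevel, dif_pos h]
  exact le_max' _ s (mem_filter.mpr ⟨hs, hst⟩)

lemma prevLevel_lt {s t : ℝ} (hs : s ∈ levels r) (hst : s < t) : prevLevel r t < t := by
  have h : ((levels r).filter (· < t)).Nonempty := ⟨s, mem_filter.mpr ⟨hs, hst⟩⟩
  rw [prevLevel, dif_pos h]
  exact (mem_filter.mp (max'_mem _ h)).2

def Node : Type _ := {p : X × ℝ // p.2 ∈ levels r ∧ p.2 ≤ dist p.1 r}

instance : Finite (Node r) :=
  Finite.of_injective (fun p : Node r => (p.1.1, (⟨p.1.2, p.2.1⟩ : levels r))) fun p q h => by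
    simp only [Prod.mk.injEq, Subtype.mk.injEq] at h
    exact Subtype.ext (Prod.ext h.1 h.2)

def NodeRel (p q : Node r) : Prop := p.1.2 = q.1.2 ∧ p.1.2 ≤ gromovProduct r p.1.1 q.1.1

/-- `mk x t` is the point at distance `t` from `r` on the geodesic from `r` to `x`; the points
`mk x t` and `mk y t` coincide when `t ≤ (x|y)`. -/
def Vertex : Type _ := Quot (NodeRel r)

instance : Finite (Vertex r) := Quot.finite _

variable {r}

def mk (x : X) (t : ℝ) (h : t ∈ levels r ∧ t ≤ dist x r) : Vertex r := Quot.mk _ ⟨(x, t), h⟩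

def level : Vertex r → ℝ := Quot.lift (fun p => p.1.2) fun _ _ h => h.1

noncomputable def parent : Vertex r → Vertex r :=
  Quot.lift
    (fun p => mk p.1.1 (prevLevel r p.1.2) ⟨prevLevel_mem r p.2.1, (prevLevel_le r _).trans p.2.2⟩)
    fun _ _ h => Quot.sound ⟨congrArg (prevLevel r) h.1, (prevLevel_le r _).trans h.2⟩

variable (r)

def root : Vertex r := mk r 0 ⟨zero_mem_levels r, dist_nonneg⟩

abbrev leaf (x : X) : Vertex r := mk x (dist x r) ⟨dist_mem_levels r x, le_rfl⟩

noncomputable def tree : SimpleGraph (Vertex r) := parentGraph parent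

def weight : Sym2 (Vertex r) → ℝ :=
  Sym2.lift ⟨fun a b => |level a - level b|, fun _ _ => abs_sub_comm _ _⟩

lemma weight_nonneg (e : Sym2 (Vertex r)) : 0 ≤ weight r e := by
  induction e using Sym2.ind with | _ a b => exact abs_nonneg _

variable {r}

lemma level_parent_lt {v : Vertex r} (h : parent v ≠ v) : level (parent v) < level v := by
  induction v using Quot.ind with | _ p =>
  obtain ⟨⟨x, t⟩, ht⟩ := p
  refine (prevLevel_le r t).lt_of_ne fun heq => h ?_
  exact congrArg (Quot.mk _) (Subtype.ext (Prod.ext rfl heq))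

lemma eq_root_of_parent_eq {v : Vertex r} (h : parent v = v) : v = root r := by
  induction v using Quot.ind with | _ p =>
  obtain ⟨⟨x, t⟩, ht⟩ := p
  have ht0 : t = 0 := by
    refine (nonneg_of_mem_levels r ht.1).eq_or_lt.elim Eq.symm fun hpos => ?_
    exact absurd (congrArg level h) (prevLevel_lt r (zero_mem_levels r) hpos).ne
  exact Quot.sound ⟨ht0, ht0 ▸ gromovProduct_nonneg r x r⟩

variable (r)

lemma isTree_tree : (tree r).IsTree :=
  isTree_parentGraph (fun _ => level_parent_lt) fun _ => eq_root_of_parent_eq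

variable {r}

lemma exists_descending_isPath (x : X) {s t : ℝ} (hs : s ∈ levels r ∧ s ≤ dist x r)
    (ht : t ∈ levels r ∧ t ≤ dist x r) (hst : s ≤ t) :
    ∃ w : (tree r).Walk (mk x t ht) (mk x s hs), w.IsPath ∧
      (w.edges.map (weight r)).sum = t - s ∧
      ∀ v ∈ w.support, ∃ u h, s ≤ u ∧ u ≤ t ∧ v = mk x u h := by
  induction t using
    (Set.wellFoundedOn_iff.mp ((levels r).finite_toSet.wellFoundedOn (r := (· < ·)))).induction
    with | _ t ih =>
  obtain rfl | hlt := hst.eq_or_lt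
  · exact ⟨.nil, .nil, by simp, fun v hv => ⟨s, hs, le_rfl, le_rfl, by simpa using hv⟩⟩
  set p := prevLevel r t
  have hp : p ∈ levels r ∧ p ≤ dist x r := ⟨prevLevel_mem r ht.1, (prevLevel_le r t).trans ht.2⟩
  have hpt : p < t := prevLevel_lt r hs.1 hlt
  obtain ⟨w, hw, hsum, hsupp⟩ := ih p ⟨hpt, hp.1, ht.1⟩ hp (le_prevLevel r hs.1 hlt)
  have hadj : (tree r).Adj (mk x t ht) (mk x p hp) :=
    parentGraph_adj_parent fun h => hpt.ne (congrArg level h)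
  refine ⟨.cons hadj w, ?_, ?_, ?_⟩
  · refine hw.cons fun hmem => ?_
    obtain ⟨u, hu, -, hup, heq⟩ := hsupp _ hmem
    exact (hup.trans_lt hpt).ne (congrArg level heq).symm
  · rw [Walk.edges_cons, List.map_cons, List.sum_cons, hsum]
    change |t - p| + (p - s) = t - s
    rw [abs_of_pos (sub_pos.mpr hpt)]
    ring
  · intro v hv
    rcases List.mem_cons.mp hv with rfl | hv
    · exact ⟨t, ht, hlt.le, le_rfl, rfl⟩
    · obtain ⟨u, hu, hsu, hup, rfl⟩ := hsupp v hv
      exact ⟨u, hu, hsu, hup.trans hpt.le, rfl⟩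

variable (hG : ∀ x y z : X, min (gromovProduct r x z) (gromovProduct r z y) ≤ gromovProduct r x y)
include hG

lemma equivalence_nodeRel : Equivalence (NodeRel r) where
  refl p := ⟨rfl, (gromovProduct_self r p.1.1).symm ▸ p.2.2⟩
  symm {p q} h := ⟨h.1.symm, h.1 ▸ gromovProduct_comm r p.1.1 q.1.1 ▸ h.2⟩
  trans {p q u} h h' := ⟨h.1.trans h'.1, (le_min h.2 (h.1 ▸ h'.2)).trans (hG p.1.1 u.1.1 q.1.1)⟩

lemma mk_eq_mk_iff {x y : X} {t s : ℝ} (ht : t ∈ levels r ∧ t ≤ dist x r)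
    (hs : s ∈ levels r ∧ s ≤ dist y r) :
    mk x t ht = mk y s hs ↔ t = s ∧ t ≤ gromovProduct r x y :=
  ⟨fun h => (equivalence_nodeRel hG).eqvGen_iff.mp (Quot.eqvGen_exact h), fun h => Quot.sound h⟩

lemma exists_isPath_leaf (x y : X) :
    ∃ w : (tree r).Walk (leaf r x) (leaf r y), w.IsPath ∧
      (w.edges.map (weight r)).sum = dist x y := by
  set g := gromovProduct r x y
  have hgx : g ∈ levels r ∧ g ≤ dist x r :=
    ⟨gromovProduct_mem_levels r x y, gromovProduct_le_dist r x y⟩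
  have hgy : g ∈ levels r ∧ g ≤ dist y r :=
    ⟨gromovProduct_mem_levels r x y,
      (gromovProduct_comm r x y).trans_le (gromovProduct_le_dist r y x)⟩
  have hjoin : mk y g hgy = mk x g hgx :=
    (mk_eq_mk_iff hG hgy hgx).mpr ⟨rfl, (gromovProduct_comm r x y).le⟩
  obtain ⟨wx, hwx, hsumx, hsuppx⟩ :=
    exists_descending_isPath x hgx ⟨dist_mem_levels r x, le_rfl⟩ (gromovProduct_le_dist r x y)
  obtain ⟨wy, hwy, hsumy, hsuppy⟩ :=
    exists_descending_isPath y hgy ⟨dist_mem_levels r y, le_rfl⟩ hgy.2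
  refine ⟨wx.append (wy.reverse.copy hjoin rfl),
    hwx.append ((Walk.isPath_copy _ _ _).mpr hwy.reverse) ?_, ?_⟩
  · intro v hvx hvy
    simp only [Walk.support_copy, Walk.support_reverse, List.mem_reverse] at hvy
    obtain ⟨u, hu, hgu, -, rfl⟩ := hsuppx v hvx
    obtain ⟨u', hu', hgu', -, heq⟩ := hsuppy _ hvy
    obtain ⟨rfl, hug⟩ := (mk_eq_mk_iff hG hu hu').mp heq
    obtain rfl : u = g := le_antisymm hug hgu
    rfl
  · rw [Walk.edges_append, Walk.edges_copy, Walk.edges_reverse, List.map_append, List.map_reverse,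
      List.sum_append, List.sum_reverse, hsumx, hsumy]
    simp only [g, gromovProduct]
    ring

end GromovTree

def IsTreeMetric (X : Type) [MetricSpace X] : Prop :=
  ∃ (W : Type) (_ : Fintype W) (T : SimpleGraph W) (wt : Sym2 W → ℝ) (dT : W → W → ℝ) (f : X → W),
    T.IsTree ∧ (∀ e, 0 ≤ wt e) ∧
    (∀ (a b : W) (p : T.Walk a b), p.IsPath → dT a b = (p.edges.map wt).sum) ∧
    ∀ x y : X, dist x y = dT (f x) (f y)

lemma IsTreeMetric.four_point {X : Type} [MetricSpace X] (h : IsTreeMetric X) (a b c d : X) :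
    dist a b + dist c d ≤ max (dist a c + dist b d) (dist a d + dist b c) := by
  obtain ⟨W, _, T, wt, dT, f, hT, hwt, hdT, hf⟩ := h
  simp only [hf]
  exact hT.four_point hwt hdT _ _ _ _

lemma isTreeMetric_of_four_point {X : Type} [Fintype X] [MetricSpace X]
    (h : ∀ a b c d : X, dist a b + dist c d ≤ max (dist a c + dist b d) (dist a d + dist b c)) :
    IsTreeMetric X := by
  rcases isEmpty_or_nonempty X with hX | ⟨⟨r⟩⟩
  · have hT : (⊥ : SimpleGraph Unit).IsTree := .of_subsingleton
    obtain ⟨dT, hdT⟩ := hT.exists_forall_isPath_eq_sum fun _ => (0 : ℝ)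
    exact ⟨Unit, inferInstance, ⊥, fun _ => 0, dT, isEmptyElim, hT, fun _ => le_rfl, hdT,
      isEmptyElim⟩
  · open GromovTree in
    obtain ⟨dT, hdT⟩ := (isTree_tree r).exists_forall_isPath_eq_sum (weight r)
    refine ⟨Vertex r, .ofFinite _, tree r, weight r, dT, leaf r, isTree_tree r, weight_nonneg r,
      hdT, fun x y => ?_⟩
    obtain ⟨w, hw, hsum⟩ := exists_isPath_leaf (min_gromovProduct_le h r) x y
    rw [hdT _ _ w hw, hsum]

/-- A finite metric space is a tree metric (embeds isometrically into a weighted tree,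
modelled by a finite tree `T` with nonnegative edge weights `wt` and path-metric `dT`)
if and only if it has hyperbolicity 0, i.e., for every four points the two larger of
the three distance sums are equal (the four-point condition). -/
theorem tree_metric_iff_four_point_condition {X : Type} [Fintype X] [MetricSpace X] :
    (∃ (W : Type) (_ : Fintype W) (T : SimpleGraph W) (wt : Sym2 W → ℝ)
        (dT : W → W → ℝ) (f : X → W),
      T.IsTree ∧ (∀ e, 0 ≤ wt e) ∧
      (∀ (a b : W) (p : T.Walk a b), p.IsPath → dT a b = (p.edges.map wt).sum) ∧
      (∀ x y : X, dist x y = dT (f x) (f y))) ↔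
    (∀ u v w x : X, metricDelta4 u v w x = 0) := by
  rw [forall_metricDelta4_eq_zero_iff]
  exact ⟨IsTreeMetric.four_point, isTreeMetric_of_four_point⟩
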